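/- Let P = {x ∈ ℝⁿ : Ax = b, Bx ≤ d}, let c ∈ ℤⁿ, and suppose the minimum of cᵀx over P is attained at x_min. Then for every feasible x ∈ P with cᵀx > cᵀx_min there exist a circuit g ∈ C(A,B) and α > 0 such that x + αg ∈ P and −cᵀ(αg) ≥ (cᵀx − cᵀx_min)/n. -/

import Mathlib

noncomputable section

variable {n mA mB : ℕ}

/-- The real matrix obtained from an integer matrix. -/
def rmat {m k : Type*} (M : Matrix m k ℤ) : Matrix m k ℝ := M.map (fun z => (z : ℝ))

/-- The real vector obtained from an integer vector. -/
def rvec {m : Type*} (v : m → ℤ) : m → ℝ := fun i => (v i : ℝ)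

/-- The feasible region `P = {x : Ax = b, Bx ≤ d}`. -/
def Pset (A : Matrix (Fin mA) (Fin n) ℤ) (B : Matrix (Fin mB) (Fin n) ℤ)
    (b : Fin mA → ℤ) (d : Fin mB → ℤ) : Set (Fin n → ℝ) :=
  {x | (rmat A).mulVec x = rvec b ∧ ∀ i, (rmat B).mulVec x i ≤ (d i : ℝ)}

/-- `g` is a circuit of the system `Ax = b, Bx ≤ d`:  `g` is a nonzero kernel element of `A`
whose image `Bg` is support-minimal among `{By : y ∈ ker A, y ≠ 0}`. -/
def IsCircuit (A : Matrix (Fin mA) (Fin n) ℤ) (B : Matrix (Fin mB) (Fin n) ℤ)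
    (g : Fin n → ℝ) : Prop :=
  g ≠ 0 ∧ (rmat A).mulVec g = 0 ∧
    ∀ y : Fin n → ℝ, y ≠ 0 → (rmat A).mulVec y = 0 →
      ¬ ({i | (rmat B).mulVec y i ≠ 0} ⊂ {i | (rmat B).mulVec g i ≠ 0})

/-- The set `C(A,B)` of circuits, normalized to have coprime integer components. -/
def CAB (A : Matrix (Fin mA) (Fin n) ℤ) (B : Matrix (Fin mB) (Fin n) ℤ) :
    Set (Fin n → ℝ) :=
  {g | IsCircuit A B g ∧ ∃ gz : Fin n → ℤ, (∀ i, g i = (gz i : ℝ)) ∧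
        Finset.univ.gcd (fun i => (gz i).natAbs) = 1}

/-- `cᵀx` for an integer objective `c` and a real point `x`. -/
def dotIC (c : Fin n → ℤ) (x : Fin n → ℝ) : ℝ := ∑ i, (c i : ℝ) * x i

/-- The 1-norm of a vector. -/
def norm1 (x : Fin n → ℝ) : ℝ := ∑ i, |x i|

/-- `α g` is a maximal augmentation at `x` (within `P`). -/
def IsMaxAug (P : Set (Fin n → ℝ)) (x g : Fin n → ℝ) (α : ℝ) : Prop :=
  0 < α ∧ x + α • g ∈ P ∧ ∀ ε : ℝ, 0 < ε → x + (α + ε) • g ∉ P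

/-- `δ`: the largest absolute value of the determinant of an `n × n` submatrix of the
stacked matrix `(A; B)`. -/
def deltaMax (A : Matrix (Fin mA) (Fin n) ℤ) (B : Matrix (Fin mB) (Fin n) ℤ) : ℝ :=
  sSup {r : ℝ | ∃ f : Fin n → (Fin mA ⊕ Fin mB), Function.Injective f ∧
        r = |((((Matrix.fromRows A B).submatrix f id).det : ℤ) : ℝ)|}

/-!
Put `y = xmin - x ∈ ker A`. Repeatedly subtracting from `y` a circuit `g` whose image `Bg` is
sign-compatible with `By`, with the ratio-test step length, writes `y = ∑ λₖ gₖ` with `λₖ > 0`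
and every `Bgₖ` sign-compatible with `By`. Each step strictly shrinks the subspace
`{z ∈ ker A : supp Bz ⊆ supp By}`, so there are at most `n` terms. Sign-compatibility makes
every `x + λₖ gₖ` feasible, since it moves no constraint of `Bx ≤ d` further than `xmin`
does, and because the `cᵀ(λₖ gₖ)` add up to `-(cᵀx - cᵀxmin)`, one of them is at most a
`1/n` share of it. Finally a circuit spans the real kernel of an integer system, so it is a
positive multiple of a primitive integer vector.
-/

open Matrix Function

theorem List.exists_mem_le_sum_div {α : Type*} {l : List α} (f : α → ℝ) {N : ℕ}
    (hN : l.length ≤ N) (hneg : (l.map f).sum < 0) : ∃ a ∈ l, f a ≤ (l.map f).sum / N := by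
  have hl : l ≠ [] := by rintro rfl; simp at hneg
  have hN0 : (0 : ℝ) < N := by exact_mod_cast (List.length_pos_iff.mpr hl).trans_le hN
  refine List.exists_le_of_sum_le hl f _ ?_
  rw [List.map_const', List.sum_replicate, nsmul_eq_mul]
  calc (l.map f).sum = N * ((l.map f).sum / N) := by field_simp
    _ ≤ l.length * ((l.map f).sum / N) :=
      mul_le_mul_of_nonpos_right (by exact_mod_cast hN) (div_neg_of_neg_of_pos hneg hN0).le

section IntegerVectors

variable {m k : Type*}

theorem rmat_mul {l : Type*} [Fintype l] (M : Matrix m l ℤ) (N : Matrix l k ℤ) :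
    rmat (M * N) = rmat M * rmat N :=
  Matrix.map_mul (f := Int.castRingHom ℝ)

theorem rmat_transpose (M : Matrix m k ℤ) : rmat Mᵀ = (rmat M)ᵀ :=
  transpose_map

theorem rmat_mulVec_rvec [Fintype k] (M : Matrix m k ℤ) (w : k → ℤ) :
    rmat M *ᵥ rvec w = rvec (M *ᵥ w) :=
  funext fun i => (RingHom.map_mulVec (Int.castRingHom ℝ) M w i).symm

theorem rmat_fromRows_mulVec_eq_zero [Fintype k] {m' : Type*} (M : Matrix m k ℤ)
    (M' : Matrix m' k ℤ) (v : k → ℝ) :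
    rmat (fromRows M M') *ᵥ v = 0 ↔ rmat M *ᵥ v = 0 ∧ rmat M' *ᵥ v = 0 := by
  rw [rmat, fromRows_map, fromRows_mulVec, ← Sum.elim_zero_zero, Sum.elim_eq_iff]
  rfl

theorem rvec_eq_zero {w : k → ℤ} : rvec w = 0 ↔ w = 0 := by
  simp [funext_iff, rvec]

theorem transpose_mul_self_mulVec_eq_zero {R : Type*} [Fintype m] [Fintype k] [PartialOrder R]
    [CommRing R] [StarRing R] [TrivialStar R] [StarOrderedRing R] [NoZeroDivisors R]
    (M : Matrix m k R) (u : k → R) : (Mᵀ * M) *ᵥ u = 0 ↔ M *ᵥ u = 0 := by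
  rw [← conjTranspose_eq_transpose_of_trivial, conjTranspose_mul_self_mulVec_eq_zero]

theorem exists_int_mulVec_eq_zero [Fintype m] [Fintype k] [DecidableEq k] (M : Matrix m k ℤ)
    {v : k → ℝ} (hv : v ≠ 0) (hMv : rmat M *ᵥ v = 0) :
    ∃ w : k → ℤ, w ≠ 0 ∧ M *ᵥ w = 0 := by
  have hdet : (Mᵀ * M).det = 0 := by
    have : ((Mᵀ * M).det : ℝ) = ((rmat M)ᵀ * rmat M).det := by
      rw [← rmat_transpose, ← rmat_mul]
      exact RingHom.map_det (Int.castRingHom ℝ) _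
    exact_mod_cast this.trans <| exists_mulVec_eq_zero_iff.mp
      ⟨v, hv, (transpose_mul_self_mulVec_eq_zero _ v).mpr hMv⟩
  obtain ⟨w, hw0, hw⟩ := exists_mulVec_eq_zero_iff.mpr hdet
  exact ⟨w, hw0, (transpose_mul_self_mulVec_eq_zero M w).mp hw⟩

theorem exists_primitive_smul_eq {ι : Type*} [Fintype ι] {w : ι → ℤ} (hw : w ≠ 0) :
    ∃ p : ι → ℤ, Finset.univ.gcd (fun i => (p i).natAbs) = 1 ∧
      ∃ c : ℤ, c ≠ 0 ∧ w = c • p := by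
  set d := Finset.univ.gcd fun i => (w i).natAbs
  obtain ⟨i₁, hi₁⟩ : ∃ i, w i ≠ 0 := Function.ne_iff.mp hw
  have hd : ∀ i, (d : ℤ) ∣ w i :=
    fun i => Int.natCast_dvd.mpr (Finset.gcd_dvd (Finset.mem_univ i))
  refine ⟨fun i => w i / d, ?_, d, ?_, funext fun i => (Int.mul_ediv_cancel' (hd i)).symm⟩
  · simp only [Int.natAbs_ediv_of_dvd (hd _), Int.natAbs_natCast]
    exact Finset.gcd_div_eq_one (Finset.mem_univ i₁) (Int.natAbs_ne_zero.mpr hi₁)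
  · exact Nat.cast_ne_zero.mpr fun h =>
      hi₁ (Int.natAbs_eq_zero.mp (Finset.gcd_eq_zero_iff.mp h i₁ (Finset.mem_univ i₁)))

end IntegerVectors

section SignCompatible

variable {ι 𝕜 : Type*} [Field 𝕜] [LinearOrder 𝕜]

def SignCompatible (u v : ι → 𝕜) : Prop :=
  ∀ i, 0 ≤ u i * v i ∧ (v i = 0 → u i = 0)

namespace SignCompatible

variable {u v w : ι → 𝕜}

theorem refl [IsStrictOrderedRing 𝕜] (u : ι → 𝕜) : SignCompatible u u :=
  fun _ => ⟨mul_self_nonneg _, id⟩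

theorem trans [IsStrictOrderedRing 𝕜] (huv : SignCompatible u v) (hvw : SignCompatible v w) :
    SignCompatible u w := by
  intro i
  obtain ⟨huv, hv⟩ := huv i
  obtain ⟨hvw, hw⟩ := hvw i
  refine ⟨?_, hv ∘ hw⟩
  rcases eq_or_ne (v i) 0 with hv0 | hv0
  · simp [hv hv0]
  · nlinarith [mul_nonneg huv hvw, mul_self_pos.mpr hv0]

theorem smul_left [IsStrictOrderedRing 𝕜] (huv : SignCompatible u v) {t : 𝕜} (ht : 0 < t) :
    SignCompatible (t • u) v :=
  fun i => ⟨by simpa [mul_assoc] using mul_nonneg ht.le (huv i).1,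
    fun hv => by simp [(huv i).2 hv]⟩

theorem support_subset (huv : SignCompatible u v) : support u ⊆ support v :=
  fun i hu hv => hu ((huv i).2 hv)

theorem le_max_zero_of_mem [IsStrictOrderedRing 𝕜] {l : List (ι → 𝕜)}
    (hl : ∀ u ∈ l, SignCompatible u l.sum) (hu : u ∈ l) (i : ι) :
    u i ≤ max 0 (l.sum i) := by
  rw [Pi.list_sum_apply]
  have hl' : ∀ a ∈ l.map (· i),
      0 ≤ a * (l.map (· i)).sum ∧ ((l.map (· i)).sum = 0 → a = 0) := by
    simpa [Pi.list_sum_apply] using fun u hu => hl u hu i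
  obtain ⟨hprod, hzero⟩ := hl' (u i) (List.mem_map_of_mem hu)
  rcases lt_trichotomy (l.map (· i)).sum 0 with hneg | hzero' | hpos
  · exact le_max_of_le_left (by nlinarith)
  · exact le_max_of_le_left (hzero hzero').le
  · refine le_max_of_le_right (List.single_le_sum (fun a ha => ?_) _ (List.mem_map_of_mem hu))
    exact nonneg_of_mul_nonneg_left (hl' a ha).1 hpos

end SignCompatible

variable [IsStrictOrderedRing 𝕜] [Fintype ι] {u v : ι → 𝕜}

theorem exists_sub_smul_signCompatible (hvu : support v ⊆ support u)
    (hpos : ∃ i, 0 < u i * v i) :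
    ∃ t : 𝕜, 0 < t ∧ SignCompatible (u - t • v) u ∧
      ∃ i, u i ≠ 0 ∧ (u - t • v) i = 0 := by
  classical
  set P := Finset.univ.filter fun i => 0 < u i * v i
  obtain ⟨i₀, hi₀P, hi₀⟩ := P.exists_min_image (fun i => u i / v i)
    (by simpa [P, Finset.Nonempty] using hpos)
  have hP : ∀ i ∈ P, 0 < u i * v i := fun i hi => (Finset.mem_filter.mp hi).2
  have hv : ∀ i ∈ P, v i ≠ 0 := fun i hi h => by simpa [h] using hP i hi
  have hsq : ∀ i ∈ P, u i * u i = u i * v i * (u i / v i) := fun i hi => by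
    field_simp [hv i hi]
  set t := u i₀ / v i₀
  have ht : 0 < t := by
    have := div_pos (hP i₀ hi₀P) (mul_self_pos.mpr (hv i₀ hi₀P))
    rwa [mul_div_mul_right _ _ (hv i₀ hi₀P)] at this
  refine ⟨t, ht, fun i => ⟨?_, fun hu => ?_⟩, i₀,
    fun h => by simpa [h] using hP i₀ hi₀P, ?_⟩
  · simp only [Pi.sub_apply, Pi.smul_apply, smul_eq_mul]
    by_cases hi : i ∈ P
    · nlinarith [hsq i hi, hi₀ i hi, hP i hi]
    · have : u i * v i ≤ 0 := not_lt.mp fun h => hi (by simp [P, h])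
      nlinarith [mul_nonneg ht.le (neg_nonneg.mpr this), mul_self_nonneg (u i)]
  · have : v i = 0 := not_not.mp fun h => hvu h hu
    simp [hu, this]
  · simp only [Pi.sub_apply, Pi.smul_apply, smul_eq_mul, t]
    field_simp [hv i₀ hi₀P]
    ring

theorem exists_sub_smul_signCompatible_of_ne_zero (hvu : support v ⊆ support u) (hv : v ≠ 0) :
    ∃ t : 𝕜, SignCompatible (u - t • v) u ∧ ∃ i, u i ≠ 0 ∧ (u - t • v) i = 0 := by
  obtain ⟨i, hvi⟩ := Function.ne_iff.mp hv
  have hui : u i ≠ 0 := hvu hvi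
  rcases (mul_ne_zero hui hvi).lt_or_gt with hneg | hpos
  · obtain ⟨t, -, ht⟩ := exists_sub_smul_signCompatible (u := u) (v := -v)
      (by rwa [support_neg]) ⟨i, by simpa using hneg⟩
    exact ⟨-t, by simpa [sub_eq_add_neg] using ht⟩
  · obtain ⟨t, -, ht⟩ := exists_sub_smul_signCompatible hvu ⟨i, hpos⟩
    exact ⟨t, ht⟩

end SignCompatible

theorem dotIC_sub (c : Fin n → ℤ) (x y : Fin n → ℝ) :
    dotIC c (x - y) = dotIC c x - dotIC c y := by
  simp [dotIC, mul_sub, Finset.sum_sub_distrib]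

theorem dotIC_smul (c : Fin n → ℤ) (r : ℝ) (x : Fin n → ℝ) :
    dotIC c (r • x) = r * dotIC c x := by
  simp [dotIC, Finset.mul_sum, mul_left_comm]

section Circuit

variable {A : Matrix (Fin mA) (Fin n) ℤ} {B : Matrix (Fin mB) (Fin n) ℤ}

theorem add_mem_Pset {b : Fin mA → ℤ} {d : Fin mB → ℤ} {x y z : Fin n → ℝ}
    (hx : x ∈ Pset A B b d) (hxy : x + y ∈ Pset A B b d) (hAz : rmat A *ᵥ z = 0)
    (hBz : ∀ i, (rmat B *ᵥ z) i ≤ max 0 ((rmat B *ᵥ y) i)) : x + z ∈ Pset A B b d := by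
  refine ⟨by rw [mulVec_add, hAz, add_zero]; exact hx.1, fun i => ?_⟩
  have hxi := hx.2 i
  have hxyi := hxy.2 i
  rw [mulVec_add, Pi.add_apply] at hxyi ⊢
  rcases le_total 0 ((rmat B *ᵥ y) i) with h | h
  · linarith [hBz i, max_eq_right h]
  · linarith [hBz i, max_eq_left h]

theorem eq_zero_of_rank_fromRows_eq (hAB : (rmat (fromRows A B)).rank = n) :
    ∀ z : Fin n → ℝ, rmat A *ᵥ z = 0 → rmat B *ᵥ z = 0 → z = 0 := by
  intro z hAz hBz
  have hker : LinearMap.ker (rmat (fromRows A B)).mulVecLin = ⊥ := by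
    have := LinearMap.finrank_range_add_finrank_ker (rmat (fromRows A B)).mulVecLin
    rw [← Matrix.rank, hAB, Module.finrank_fin_fun] at this
    exact Submodule.finrank_eq_zero.mp (by omega)
  have hz : z ∈ LinearMap.ker (rmat (fromRows A B)).mulVecLin :=
    (rmat_fromRows_mulVec_eq_zero A B z).mpr ⟨hAz, hBz⟩
  simpa [hker] using hz

theorem IsCircuit.smul {g : Fin n → ℝ} (hg : IsCircuit A B g) {t : ℝ} (ht : t ≠ 0) :
    IsCircuit A B (t • g) := by
  obtain ⟨hg0, hAg, hmin⟩ := hg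
  refine ⟨smul_ne_zero ht hg0, by rw [mulVec_smul, hAg, smul_zero], fun y hy hAy => ?_⟩
  change ¬support _ ⊂ support _
  rw [mulVec_smul, support_const_smul_of_ne_zero t _ ht]
  exact hmin y hy hAy

theorem IsCircuit.mulVec_ne_zero
    (hAB : ∀ z : Fin n → ℝ, rmat A *ᵥ z = 0 → rmat B *ᵥ z = 0 → z = 0)
    {g : Fin n → ℝ} (hg : IsCircuit A B g) : rmat B *ᵥ g ≠ 0 :=
  fun h => hg.1 (hAB g hg.2.1 h)

theorem IsCircuit.eq_smul_of_support_subset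
    (hAB : ∀ z : Fin n → ℝ, rmat A *ᵥ z = 0 → rmat B *ᵥ z = 0 → z = 0)
    {g z : Fin n → ℝ} (hg : IsCircuit A B g) (hAz : rmat A *ᵥ z = 0)
    (hz : support (rmat B *ᵥ z) ⊆ support (rmat B *ᵥ g)) : ∃ t : ℝ, z = t • g := by
  obtain ⟨i, hgi⟩ : ∃ i, (rmat B *ᵥ g) i ≠ 0 := Function.ne_iff.mp (hg.mulVec_ne_zero hAB)
  set w := (rmat B *ᵥ g) i • z - (rmat B *ᵥ z) i • g
  have hBw : ∀ j, (rmat B *ᵥ w) j =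
      (rmat B *ᵥ g) i * (rmat B *ᵥ z) j - (rmat B *ᵥ z) i * (rmat B *ᵥ g) j := by
    simp [w, mulVec_sub, mulVec_smul]
  -- `Bw` vanishes outside `supp (Bg)` and at `i`, so `w ≠ 0` would contradict minimality of `g`
  have hw : w = 0 := by
    by_contra hw0
    refine hg.2.2 w hw0 (by simp [w, mulVec_sub, mulVec_smul, hAz, hg.2.1]) ?_
    have hsub : support (rmat B *ᵥ w) ⊆ support (rmat B *ᵥ g) := fun j hj hgj => hj <| by
      rw [hBw, hgj, not_not.mp fun h => hz h hgj]
      ring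
    exact (Set.ssubset_iff_of_subset hsub).mpr ⟨i, hgi, by simp [hBw, mul_comm]⟩
  refine ⟨(rmat B *ᵥ z) i / (rmat B *ᵥ g) i, funext fun j => ?_⟩
  have := congrFun hw j
  simp only [w, Pi.sub_apply, Pi.smul_apply, smul_eq_mul, Pi.zero_apply] at this
  simp only [Pi.smul_apply, smul_eq_mul]
  field_simp
  linarith

theorem exists_isCircuit_signCompatible
    (hAB : ∀ z : Fin n → ℝ, rmat A *ᵥ z = 0 → rmat B *ᵥ z = 0 → z = 0)
    {y : Fin n → ℝ} (hy : y ≠ 0) (hAy : rmat A *ᵥ y = 0) :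
    ∃ g, IsCircuit A B g ∧ SignCompatible (rmat B *ᵥ g) (rmat B *ᵥ y) := by
  obtain ⟨g, ⟨hg0, hAg, hgy⟩, hmin⟩ :=
    (InvImage.wf (fun z => support (rmat B *ᵥ z)) wellFounded_lt).has_min
      {z | z ≠ 0 ∧ rmat A *ᵥ z = 0 ∧ SignCompatible (rmat B *ᵥ z) (rmat B *ᵥ y)}
      ⟨y, hy, hAy, .refl _⟩
  refine ⟨g, ⟨hg0, hAg, fun w hw0 hAw hwg => ?_⟩, hgy⟩
  -- otherwise a suitable `g - t • w` would be a conforming vector of smaller support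
  obtain ⟨t, hcompat, i, hgi, hi⟩ :=
    exists_sub_smul_signCompatible_of_ne_zero hwg.subset fun h => hw0 (hAB w hAw h)
  obtain ⟨j, hgj, hwj⟩ := Set.exists_of_ssubset hwg
  have hB : rmat B *ᵥ (g - t • w) = rmat B *ᵥ g - t • rmat B *ᵥ w := by
    rw [mulVec_sub, mulVec_smul]
  refine hmin (g - t • w) ⟨fun h => hgj ?_, ?_, hB ▸ hcompat.trans hgy⟩ ?_
  · simpa [h, not_not.mp hwj] using (congrFun hB j).symm
  · rw [mulVec_sub, mulVec_smul, hAg, hAw, smul_zero, sub_zero]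
  · rw [InvImage, hB]
    exact (Set.ssubset_iff_of_subset hcompat.support_subset).mpr ⟨i, hgi, not_not.mpr hi⟩

theorem neg_mem_CAB {g : Fin n → ℝ} (hg : g ∈ CAB A B) : -g ∈ CAB A B := by
  obtain ⟨hcirc, gz, hgz, hgcd⟩ := hg
  exact ⟨by simpa using hcirc.smul (t := -1) (by norm_num), -gz, fun i => by simp [hgz],
    by simpa using hgcd⟩

theorem IsCircuit.exists_mem_CAB
    (hAB : ∀ z : Fin n → ℝ, rmat A *ᵥ z = 0 → rmat B *ᵥ z = 0 → z = 0)
    {g : Fin n → ℝ} (hg : IsCircuit A B g) :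
    ∃ gc ∈ CAB A B, ∃ u : ℝ, 0 < u ∧ g = u • gc := by
  let M := fromRows A (B.submatrix (Subtype.val : {i // (rmat B *ᵥ g) i = 0} → Fin mB) id)
  have hM : ∀ z, rmat M *ᵥ z = 0 ↔
      rmat A *ᵥ z = 0 ∧ support (rmat B *ᵥ z) ⊆ support (rmat B *ᵥ g) := by
    intro z
    rw [rmat_fromRows_mulVec_eq_zero, support_subset_iff']
    exact and_congr_right' ⟨fun h i hi => congrFun h ⟨i, not_not.mp hi⟩,
      fun h => funext fun i => h i (not_not.mpr i.2)⟩
  obtain ⟨w, hw0, hMw⟩ := exists_int_mulVec_eq_zero M hg.1 ((hM g).mpr ⟨hg.2.1, subset_rfl⟩)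
  obtain ⟨p, hp, c, hc, rfl⟩ := exists_primitive_smul_eq hw0
  have hMp : rmat M *ᵥ rvec p = 0 := by
    rw [mulVec_smul] at hMw
    rw [rmat_mulVec_rvec, (smul_eq_zero.mp hMw).resolve_left hc, rvec_eq_zero]
  obtain ⟨hAp, hBp⟩ := (hM _).mp hMp
  obtain ⟨t, ht⟩ := hg.eq_smul_of_support_subset hAB hAp hBp
  have ht0 : t ≠ 0 := by
    rintro rfl
    exact right_ne_zero_of_smul hw0 (rvec_eq_zero.mp (by simpa using ht))
  have hpC : rvec p ∈ CAB A B := ⟨ht ▸ hg.smul ht0, p, fun _ => rfl, hp⟩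
  have hg_eq : g = t⁻¹ • rvec p := by rw [ht, smul_smul, inv_mul_cancel₀ ht0, one_smul]
  rcases ht0.lt_or_gt with hneg | hpos
  · exact ⟨-rvec p, neg_mem_CAB hpC, -t⁻¹, by simpa using hneg, by rw [hg_eq, neg_smul_neg]⟩
  · exact ⟨rvec p, hpC, t⁻¹, inv_pos.mpr hpos, hg_eq⟩

variable (A B) in
def supportedKernel (y : Fin n → ℝ) : Submodule ℝ (Fin n → ℝ) :=
  LinearMap.ker (rmat A).mulVecLin ⊓
    (Submodule.pi {i | (rmat B *ᵥ y) i = 0} fun _ => ⊥).comap (rmat B).mulVecLin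

theorem mem_supportedKernel {y z : Fin n → ℝ} : z ∈ supportedKernel A B y ↔
    rmat A *ᵥ z = 0 ∧ support (rmat B *ᵥ z) ⊆ support (rmat B *ᵥ y) := by
  rw [support_subset_iff']
  simp [supportedKernel, Submodule.mem_pi]

theorem finrank_supportedKernel_le (y : Fin n → ℝ) :
    Module.finrank ℝ (supportedKernel A B y) ≤ n :=
  (Submodule.finrank_le _).trans (Module.finrank_fin_fun ℝ).le

variable (A B) in
structure IsConformalCircuitDecomposition (y : Fin n → ℝ) (L : List (ℝ × (Fin n → ℝ))) :
    Prop where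
  sum_eq : (L.map fun p => p.1 • p.2).sum = y
  pos : ∀ p ∈ L, 0 < p.1
  isCircuit : ∀ p ∈ L, IsCircuit A B p.2
  signCompatible : ∀ p ∈ L, SignCompatible (rmat B *ᵥ p.2) (rmat B *ᵥ y)

theorem exists_conformalCircuitDecomposition
    (hAB : ∀ z : Fin n → ℝ, rmat A *ᵥ z = 0 → rmat B *ᵥ z = 0 → z = 0)
    {y : Fin n → ℝ} (hAy : rmat A *ᵥ y = 0) :
    ∃ L, L.length ≤ Module.finrank ℝ (supportedKernel A B y) ∧
      IsConformalCircuitDecomposition A B y L := by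
  induction hk : Module.finrank ℝ (supportedKernel A B y) using Nat.strong_induction_on
    generalizing y with
  | _ k ih =>
  rcases eq_or_ne y 0 with rfl | hy
  · exact ⟨[], Nat.zero_le _, by simp, by simp, by simp, by simp⟩
  obtain ⟨g, hg, hgy⟩ := exists_isCircuit_signCompatible hAB hy hAy
  obtain ⟨i, hgi⟩ : ∃ i, (rmat B *ᵥ g) i ≠ 0 := Function.ne_iff.mp (hg.mulVec_ne_zero hAB)
  have hpos : 0 < (rmat B *ᵥ y) i * (rmat B *ᵥ g) i :=
    (mul_comm ((rmat B *ᵥ g) i) _ ▸ (hgy i).1).lt_of_ne'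
      (mul_ne_zero (hgy.support_subset hgi) hgi)
  obtain ⟨t, ht, hcompat, i₀, hyi₀, hy'i₀⟩ :=
    exists_sub_smul_signCompatible hgy.support_subset ⟨i, hpos⟩
  set y' := y - t • g
  have hBy' : rmat B *ᵥ y' = rmat B *ᵥ y - t • rmat B *ᵥ g := by
    rw [mulVec_sub, mulVec_smul]
  have hAy' : rmat A *ᵥ y' = 0 := by
    rw [mulVec_sub, mulVec_smul, hAy, hg.2.1, smul_zero, sub_zero]
  have hlt : supportedKernel A B y' < supportedKernel A B y := by
    refine SetLike.lt_iff_le_and_exists.mpr ⟨fun z hz => ?_, g, ?_, ?_⟩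
    · rw [mem_supportedKernel] at hz ⊢
      exact ⟨hz.1, hz.2.trans (hBy' ▸ hcompat.support_subset)⟩
    · exact mem_supportedKernel.mpr ⟨hg.2.1, hgy.support_subset⟩
    · rw [mem_supportedKernel]
      rintro ⟨-, h⟩
      have hgi₀ : (rmat B *ᵥ g) i₀ ≠ 0 := fun h0 => hyi₀ (by simpa [h0] using hy'i₀)
      exact h hgi₀ (hBy' ▸ hy'i₀)
  have hk' := hk ▸ Submodule.finrank_lt_finrank_of_lt hlt
  obtain ⟨L, hlen, hL⟩ := ih _ hk' hAy' rfl
  refine ⟨(t, g) :: L, by simp; omega, ?_, ?_, ?_, ?_⟩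
  · simp [hL.sum_eq, y']
  · simpa [ht] using hL.pos
  · simpa [hg] using hL.isCircuit
  · simpa [hgy] using fun p hp => (hL.signCompatible p hp).trans (hBy' ▸ hcompat)

namespace IsConformalCircuitDecomposition

variable {y : Fin n → ℝ} {L : List (ℝ × (Fin n → ℝ))}

theorem dotIC_eq (hL : IsConformalCircuitDecomposition A B y L) (c : Fin n → ℤ) :
    dotIC c y = (L.map fun p => p.1 * dotIC c p.2).sum := by
  change dotProductBilin ℝ ℝ (rvec c) y = _
  rw [← hL.sum_eq, map_list_sum, List.map_map]
  simp [Function.comp_def, dotIC, rvec, dotProduct]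

theorem add_smul_mem_Pset (hL : IsConformalCircuitDecomposition A B y L)
    {b : Fin mA → ℤ} {d : Fin mB → ℤ} {x : Fin n → ℝ}
    (hx : x ∈ Pset A B b d) (hxy : x + y ∈ Pset A B b d)
    {p : ℝ × (Fin n → ℝ)} (hp : p ∈ L) : x + p.1 • p.2 ∈ Pset A B b d := by
  have hsum : (L.map fun p => rmat B *ᵥ (p.1 • p.2)).sum = rmat B *ᵥ y := by
    rw [← hL.sum_eq, ← mulVecLin_apply, map_list_sum, List.map_map]
    rfl
  refine add_mem_Pset hx hxy ?_ fun i => hsum ▸ ?_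
  · rw [mulVec_smul, (hL.isCircuit p hp).2.1, smul_zero]
  refine SignCompatible.le_max_zero_of_mem (l := L.map fun p => rmat B *ᵥ (p.1 • p.2))
    (fun v hv => ?_) (List.mem_map_of_mem hp) i
  obtain ⟨q, hq, rfl⟩ := List.mem_map.mp hv
  rw [hsum, mulVec_smul]
  exact (hL.signCompatible q hq).smul_left (hL.pos q hq)

end IsConformalCircuitDecomposition

end Circuit

theorem exists_good_circuit_augmentation_general
    (A : Matrix (Fin mA) (Fin n) ℤ) (B : Matrix (Fin mB) (Fin n) ℤ)
    (b : Fin mA → ℤ) (d : Fin mB → ℤ) (c : Fin n → ℤ)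
    (hAB : (rmat (Matrix.fromRows A B)).rank = n)
    (xmin : Fin n → ℝ) (hxmin : xmin ∈ Pset A B b d)
    (x : Fin n → ℝ) (hx : x ∈ Pset A B b d)
    (hgap : dotIC c xmin < dotIC c x) :
    ∃ (g : Fin n → ℝ) (α : ℝ), g ∈ CAB A B ∧ 0 < α ∧ x + α • g ∈ Pset A B b d ∧
      (dotIC c x - dotIC c xmin) / n ≤ -(dotIC c (α • g)) := by
  have hinj := eq_zero_of_rank_fromRows_eq hAB
  have hAy : rmat A *ᵥ (xmin - x) = 0 := by rw [mulVec_sub, hxmin.1, hx.1, sub_self]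
  obtain ⟨L, hlen, hL⟩ := exists_conformalCircuitDecomposition hinj hAy
  have hneg : (L.map fun p => p.1 * dotIC c p.2).sum < 0 := by
    rw [← hL.dotIC_eq, dotIC_sub]
    linarith
  obtain ⟨⟨t, g⟩, hp, hgain⟩ :=
    List.exists_mem_le_sum_div _ (hlen.trans (finrank_supportedKernel_le _)) hneg
  obtain ⟨gc, hgc, u, hu, rfl⟩ := (hL.isCircuit _ hp).exists_mem_CAB hinj
  refine ⟨gc, t * u, hgc, mul_pos (hL.pos _ hp) hu, ?_, ?_⟩
  · rw [mul_smul]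
    exact hL.add_smul_mem_Pset hx (by rwa [add_sub_cancel]) hp
  · rw [← hL.dotIC_eq c, dotIC_sub, dotIC_smul] at hgain
    rw [dotIC_smul, mul_assoc, ← neg_sub, neg_div]
    exact neg_le_neg hgain

/-- at any non-optimal feasible point there is a feasible circuit
augmentation gaining at least a `1/n` fraction of the optimality gap. -/
theorem exists_good_circuit_augmentation
    (A : Matrix (Fin mA) (Fin n) ℤ) (B : Matrix (Fin mB) (Fin n) ℤ)
    (b : Fin mA → ℤ) (d : Fin mB → ℤ) (c : Fin n → ℤ)
    (hmB : 1 ≤ mB)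
    (hA : (rmat A).rank = mA)
    (hAB : (rmat (Matrix.fromRows A B)).rank = n)
    (xmin : Fin n → ℝ) (hxmin : xmin ∈ Pset A B b d)
    (hopt : ∀ y ∈ Pset A B b d, dotIC c xmin ≤ dotIC c y)
    (x : Fin n → ℝ) (hx : x ∈ Pset A B b d)
    (hgap : dotIC c xmin < dotIC c x) :
    ∃ (g : Fin n → ℝ) (α : ℝ), g ∈ CAB A B ∧ 0 < α ∧ x + α • g ∈ Pset A B b d ∧
      (dotIC c x - dotIC c xmin) / n ≤ -(dotIC c (α • g)) :=
  exists_good_circuit_augmentation_general A B b d c hAB xmin hxmin x hx hgap
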